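/- Let k be a field with char(k) = 0 or char(k) ≥ (p+3)/2 and char(k) ≠ 2. Define τ: ∧²S^{p+2}U → S^{2p+2}U ⊕ S^{2p+4}U by τ(x^i ∧ x^j) = ((−1)^i (i−j) x^{i+j−1}, 0) if i ≡ j mod 2, and τ(x^i ∧ x^j) = (0, (−1)^i x^{i+j}) if i ≢ j mod 2. Then for any nonzero h ∈ S^{p+2}U of degree d, the elements τ(x^j ∧ h) for j ∈ {0, …, d−1, d+1, …, p+2} are linearly independent. -/
import Mathlib


/-!
STATEMENT 9: Let `k` be a field with `char k = 0` or `char k ≥ (p+3)/2`, and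
`char k ≠ 2`.  Define `τ : ∧²S^{p+2}U → S^{2p+2}U ⊕ S^{2p+4}U` by
`τ(x^i ∧ x^j) = ((−1)^i (i−j) x^{i+j−1}, 0)` if `i ≡ j (mod 2)`, and
`τ(x^i ∧ x^j) = (0, (−1)^i x^{i+j})` if `i ≢ j (mod 2)`.  Then for any nonzero
`h ∈ S^{p+2}U` of degree `d`, the elements `τ(x^j ∧ h)` for
`j ∈ {0, …, d−1, d+1, …, p+2}` are linearly independent.

`S^m U` is modeled by coefficient vectors; extending `τ` bilinearly,
`τ(x^j ∧ h) = Σ_i (h i)·τ(x^j ∧ x^i)`.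
-/

lemma cast_even_ne_zero (k : Type*) [Field k] (p : ℕ)
    (hchar : ringChar k = 0 ∨ p + 3 ≤ 2 * ringChar k) (hchar2 : ringChar k ≠ 2)
    (e : ℕ) (he0 : 0 < e) (hee : 2 ∣ e) (hle : e ≤ p + 2) : (e : k) ≠ 0 := by
  intro hz
  have hch : CharP k (ringChar k) := ringChar.charP k
  have hdvd : ringChar k ∣ e := (CharP.cast_eq_zero_iff k (ringChar k) e).mp hz
  rcases hchar with h0 | hq
  · rw [h0] at hdvd
    omega
  · have hprime : (ringChar k).Prime := by
      rcases CharP.char_is_prime_or_zero k (ringChar k) with hh | hh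
      · exact hh
      · omega
    have hcop : Nat.Coprime 2 (ringChar k) := by
      rw [Nat.coprime_primes Nat.prime_two hprime]
      exact fun hh => hchar2 hh.symm
    have h2q : 2 * ringChar k ∣ e := Nat.Coprime.mul_dvd_of_dvd_of_dvd hcop hee hdvd
    have := Nat.le_of_dvd he0 h2q
    omega

lemma cast_sub_ne_zero (k : Type*) [Field k] (p : ℕ)
    (hchar : ringChar k = 0 ∨ p + 3 ≤ 2 * ringChar k) (hchar2 : ringChar k ≠ 2)
    (a b : ℕ) (hab : a ≠ b) (hpar : a % 2 = b % 2) (ha : a ≤ p + 2) (hb : b ≤ p + 2) :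
    ((a : k) - (b : k)) ≠ 0 := by
  intro hz
  have heq : (a : k) = (b : k) := sub_eq_zero.mp hz
  rcases Nat.lt_or_ge a b with hlt | hge
  · have : ((b - a : ℕ) : k) = 0 := by
      rw [Nat.cast_sub hlt.le, heq, sub_self]
    exact cast_even_ne_zero k p hchar hchar2 (b - a) (by omega) (by omega) (by omega) this
  · have hlt : b < a := by omega
    have : ((a - b : ℕ) : k) = 0 := by
      rw [Nat.cast_sub hlt.le, heq, sub_self]
    exact cast_even_ne_zero k p hchar hchar2 (a - b) (by omega) (by omega) (by omega) this

theorem stmt9 (k : Type*) [Field k] (p d : ℕ) (hd : d ≤ p + 2)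
    (hchar : ringChar k = 0 ∨ p + 3 ≤ 2 * ringChar k) (hchar2 : ringChar k ≠ 2)
    (h : Fin (p+3) → k)
    (hlead : h ⟨d, by omega⟩ ≠ 0)
    (hdeg : ∀ i : Fin (p+3), d < (i : ℕ) → h i = 0) :
    LinearIndependent k (fun j : {j : Fin (p+3) // (j : ℕ) ≠ d} =>
      ((fun m : Fin (2*p+3) => ∑ i : Fin (p+3),
          if ((i : ℕ) % 2 = (j.1 : ℕ) % 2 ∧ (j.1 : ℕ) + (i : ℕ) = (m : ℕ) + 1)
            then (-1 : k) ^ (j.1 : ℕ) * (((j.1 : ℕ) : k) - ((i : ℕ) : k)) * h i else 0,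
        fun m : Fin (2*p+5) => ∑ i : Fin (p+3),
          if (¬ (i : ℕ) % 2 = (j.1 : ℕ) % 2 ∧ (j.1 : ℕ) + (i : ℕ) = (m : ℕ))
            then (-1 : k) ^ (j.1 : ℕ) * h i else 0) :
        (Fin (2*p+3) → k) × (Fin (2*p+5) → k))) := by
  classical
  rw [Fintype.linearIndependent_iff]
  intro g hg
  by_contra hc
  push_neg at hc
  obtain ⟨j', hj'⟩ := hc
  obtain ⟨j0, hj0mem, hj0max⟩ :=
    (Finset.univ.filter fun j : {j : Fin (p+3) // (j : ℕ) ≠ d} => g j ≠ 0).exists_max_image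
      (fun j => (j.1 : ℕ)) ⟨j', by simp [hj']⟩
  simp only [Finset.mem_filter, Finset.mem_univ, true_and] at hj0mem hj0max
  have hgz : ∀ jj : {j : Fin (p+3) // (j : ℕ) ≠ d}, (j0.1 : ℕ) < (jj.1 : ℕ) → g jj = 0 := by
    intro jj hlt
    by_contra hne
    exact absurd (hj0max jj hne) (by omega)
  have hj0lt : (j0.1 : ℕ) < p + 3 := j0.1.isLt
  have hj0ne : (j0.1 : ℕ) ≠ d := j0.2
  have hfst : ∀ m : Fin (2*p+3),
      (∑ j : {j : Fin (p+3) // (j : ℕ) ≠ d}, g j * (∑ i : Fin (p+3),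
        if ((i : ℕ) % 2 = (j.1 : ℕ) % 2 ∧ (j.1 : ℕ) + (i : ℕ) = (m : ℕ) + 1)
          then (-1 : k) ^ (j.1 : ℕ) * (((j.1 : ℕ) : k) - ((i : ℕ) : k)) * h i else 0)) = 0 := by
    intro m
    have := congrFun (congrArg Prod.fst hg) m
    simpa [Prod.fst_sum, Finset.sum_apply, smul_eq_mul] using this
  have hsnd : ∀ m : Fin (2*p+5),
      (∑ j : {j : Fin (p+3) // (j : ℕ) ≠ d}, g j * (∑ i : Fin (p+3),
        if (¬ (i : ℕ) % 2 = (j.1 : ℕ) % 2 ∧ (j.1 : ℕ) + (i : ℕ) = (m : ℕ))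
          then (-1 : k) ^ (j.1 : ℕ) * h i else 0)) = 0 := by
    intro m
    have := congrFun (congrArg Prod.snd hg) m
    simpa [Prod.snd_sum, Finset.sum_apply, smul_eq_mul] using this
  by_cases hpar : (j0.1 : ℕ) % 2 = d % 2
  · -- leading coefficient in first component at position j0 + d - 1
    have key := hfst ⟨(j0.1 : ℕ) + d - 1, by omega⟩
    rw [Finset.sum_eq_single j0] at key
    rw [Finset.sum_eq_single (⟨d, by omega⟩ : Fin (p+3))] at key
    rw [if_pos (⟨hpar.symm, by
      show (j0.1 : ℕ) + d = (j0.1 : ℕ) + d - 1 + 1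
      omega⟩ : _ ∧ _)] at key
    · have hne2 : ((-1 : k) ^ (j0.1 : ℕ) * (((j0.1 : ℕ) : k) - ((d : ℕ) : k))
          * h ⟨d, by omega⟩) ≠ 0 :=
        mul_ne_zero (mul_ne_zero (pow_ne_zero _ (by norm_num))
          (cast_sub_ne_zero k p hchar hchar2 (j0.1 : ℕ) d hj0ne hpar (by omega) hd)) hlead
      exact hj0mem ((mul_eq_zero.mp key).resolve_right hne2)
    · -- inner: other i give 0
      intro i _ hine
      split_ifs with hcond
      · exfalso
        have h2 : (j0.1 : ℕ) + (i : ℕ) = (j0.1 : ℕ) + d - 1 + 1 := hcond.2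
        exact hine (Fin.ext (show (i : ℕ) = d by omega))
      · rfl
    · simp
    · -- outer: other j give 0
      intro b _ hbne
      rcases Nat.lt_or_ge (j0.1 : ℕ) (b.1 : ℕ) with hgt | hle
      · rw [hgz b hgt, zero_mul]
      · have hblt : (b.1 : ℕ) < (j0.1 : ℕ) := by
          rcases Nat.lt_or_ge (b.1 : ℕ) (j0.1 : ℕ) with h' | h'
          · exact h'
          · exact absurd (Subtype.ext (Fin.ext (by omega))) hbne
        rw [Finset.sum_eq_zero, mul_zero]
        intro i _
        split_ifs with hcond
        · have h2 : (b.1 : ℕ) + (i : ℕ) = (j0.1 : ℕ) + d - 1 + 1 := hcond.2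
          rw [hdeg i (by omega), mul_zero]
        · rfl
    · simp
  · -- leading coefficient in second component at position j0 + d
    have key := hsnd ⟨(j0.1 : ℕ) + d, by omega⟩
    rw [Finset.sum_eq_single j0] at key
    rw [Finset.sum_eq_single (⟨d, by omega⟩ : Fin (p+3))] at key
    rw [if_pos (⟨fun hh => hpar hh.symm, rfl⟩ : _ ∧ _)] at key
    · have hne2 : ((-1 : k) ^ (j0.1 : ℕ) * h ⟨d, by omega⟩) ≠ 0 :=
        mul_ne_zero (pow_ne_zero _ (by norm_num)) hlead
      exact hj0mem ((mul_eq_zero.mp key).resolve_right hne2)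
    · intro i _ hine
      split_ifs with hcond
      · exfalso
        have h2 : (j0.1 : ℕ) + (i : ℕ) = (j0.1 : ℕ) + d := hcond.2
        exact hine (Fin.ext (show (i : ℕ) = d by omega))
      · rfl
    · simp
    · intro b _ hbne
      rcases Nat.lt_or_ge (j0.1 : ℕ) (b.1 : ℕ) with hgt | hle
      · rw [hgz b hgt, zero_mul]
      · have hblt : (b.1 : ℕ) < (j0.1 : ℕ) := by
          rcases Nat.lt_or_ge (b.1 : ℕ) (j0.1 : ℕ) with h' | h'
          · exact h'
          · exact absurd (Subtype.ext (Fin.ext (by omega))) hbne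
        rw [Finset.sum_eq_zero, mul_zero]
        intro i _
        split_ifs with hcond
        · have h2 : (b.1 : ℕ) + (i : ℕ) = (j0.1 : ℕ) + d := hcond.2
          rw [hdeg i (by omega), mul_zero]
        · rfl
    · simp
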